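/- arXiv:2108.13707 — 4 statements merged into one kernel-verified Lean document; each statement's English description precedes it below -/
import Mathlib

section
/- Let Z₁,...,Z_q be independent ℝ^{d_z}-valued Gaussian random vectors, Z_j ~ N(0, Σ_j) with each Σ_j positive definite, let ξ_1,...,ξ_q > 0, and let A be a positive definite d_z×d_z matrix. Define, for each sign vector g ∈ {-1,1}^q, T(g) = ‖Σ_{j=1}^q g_j √ξ_j Z_j‖_A, where ‖u‖_A = √(uᵀAu). Then for all g, T(g) = T(-g) surely, and for any g, g' with g' ∉ {g,-g}, P(T(g) = T(g')) = 0. -/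
/-! With `c_g j = ±√ξ_j` the coefficients of `T(g)`, put `a = (c_g + c_{g'}) / 2` and
`b = (c_g - c_{g'}) / 2`, so that `T(g)` and `T(g')` are the `A`-norms of `U + V` and `U - V`
for `U = ∑ a_j Z_j`, `V = ∑ b_j Z_j`; by polarization they agree only on `{Uᵀ A V = 0}`.
As `g' ∉ {g, -g}`, `a` has a nonzero coordinate where `b` vanishes and vice versa, so
`(Z_j)_j ↦ (U, V)` is a surjective linear map. The joint law of the `Z_j` is absolutely continuous
with respect to Lebesgue measure, hence so is the law of `(U, V)`, and
`{(u, v) | uᵀ A v = 0}` is Lebesgue-null by Fubini: for `u ≠ 0` its slice is a hyperplane. -/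

open Matrix MeasureTheory ProbabilityTheory

namespace MeasureTheory.Measure.AbsolutelyContinuous

theorem pi_fin : ∀ {n : ℕ} {α : Fin n → Type*} [∀ i, MeasurableSpace (α i)]
    {μ ν : ∀ i, Measure (α i)} [∀ i, SigmaFinite (μ i)] [∀ i, SigmaFinite (ν i)],
    (∀ i, μ i ≪ ν i) → Measure.pi μ ≪ Measure.pi ν
  | 0, _, _, μ, ν, _, _, _ => by rw [Measure.pi_of_empty μ, Measure.pi_of_empty ν]
  | n + 1, α, _, μ, ν, _, _, h => by
    rw [← (measurePreserving_piFinSuccAbove μ 0).symm.map_eq,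
      ← (measurePreserving_piFinSuccAbove ν 0).symm.map_eq]
    exact ((h 0).prod (pi_fin fun i => h _)).map (MeasurableEquiv.measurable _)

theorem pi {ι : Type*} [Fintype ι] {α : ι → Type*} [∀ i, MeasurableSpace (α i)]
    {μ ν : ∀ i, Measure (α i)} [∀ i, SigmaFinite (μ i)] [∀ i, SigmaFinite (ν i)]
    (h : ∀ i, μ i ≪ ν i) : Measure.pi μ ≪ Measure.pi ν := by
  let e := (Fintype.equivFin ι).symm
  rw [← (measurePreserving_piCongrLeft μ e).map_eq, ← (measurePreserving_piCongrLeft ν e).map_eq]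
  exact (pi_fin fun i => h (e i)).map (MeasurableEquiv.measurable _)

end MeasureTheory.Measure.AbsolutelyContinuous

section Lebesgue

variable {n : Type*} [Fintype n]

theorem pi_gaussianReal_absolutelyContinuous (m : ℝ) {v : NNReal} (hv : v ≠ 0) :
    Measure.pi (fun _ : n => gaussianReal m v) ≪ volume :=
  Measure.AbsolutelyContinuous.pi fun _ => gaussianReal_absolutelyContinuous m hv

theorem absolutelyContinuous_map_mulVec [DecidableEq n] {L : Matrix n n ℝ} (hL : IsUnit L.det)
    {ν : Measure (n → ℝ)} (hν : ν ≪ volume) : ν.map (L *ᵥ ·) ≪ volume := by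
  have hL' : LinearMap.det (toLin' L) ≠ 0 := by rw [LinearMap.det_toLin']; exact hL.ne_zero
  exact (hν.map (toLin' L).continuous_of_finiteDimensional.measurable).trans
    (Measure.LinearMap.quasiMeasurePreserving volume _ hL').absolutelyContinuous

theorem volume_setOf_dotProduct_eq_zero {w : n → ℝ} (hw : w ≠ 0) :
    volume {x : n → ℝ | w ⬝ᵥ x = 0} = 0 :=
  Measure.addHaar_submodule volume (LinearMap.ker (dotProductBilin ℝ ℝ w)) fun h =>
    hw (dotProduct_self_eq_zero.1 (LinearMap.congr_fun (LinearMap.ker_eq_top.1 h) w))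

theorem volume_setOf_dotProduct_mulVec_eq_zero [DecidableEq n] [Nonempty n] {A : Matrix n n ℝ}
    (hA : A.det ≠ 0) : volume {p : (n → ℝ) × (n → ℝ) | p.1 ⬝ᵥ A *ᵥ p.2 = 0} = 0 := by
  have hmeas : MeasurableSet {p : (n → ℝ) × (n → ℝ) | p.1 ⬝ᵥ A *ᵥ p.2 = 0} :=
    measurableSet_eq_fun (by fun_prop) measurable_const
  rw [Measure.volume_eq_prod, Measure.measure_prod_null hmeas]
  filter_upwards [Measure.ae_ne volume (0 : n → ℝ)] with x hx
  simp only [Set.preimage_ofPred_eq, dotProduct_mulVec, Pi.zero_apply]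
  exact volume_setOf_dotProduct_eq_zero fun h => hA (exists_vecMul_eq_zero_iff.1 ⟨x, hx, h⟩)

end Lebesgue

theorem surjective_sum_smul_prod {ι 𝕜 M : Type*} [Fintype ι] [DecidableEq ι] [Field 𝕜]
    [AddCommGroup M] [Module 𝕜 M] {a b : ι → 𝕜} {i k : ι} (hai : a i ≠ 0) (hbi : b i = 0)
    (hak : a k = 0) (hbk : b k ≠ 0) :
    Function.Surjective fun z : ι → M => (∑ j, a j • z j, ∑ j, b j • z j) := by
  rintro ⟨x, y⟩
  refine ⟨Pi.single i ((a i)⁻¹ • x) + Pi.single k ((b k)⁻¹ • y), ?_⟩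
  simp [Pi.single_apply, smul_add, Finset.sum_add_distrib, hai, hbi, hak, hbk]

theorem dotProduct_mulVec_add_sub_sub {n : Type*} [Fintype n] {A : Matrix n n ℝ} (hA : A.IsSymm)
    (u v : n → ℝ) :
    (u + v) ⬝ᵥ A *ᵥ (u + v) - (u - v) ⬝ᵥ A *ᵥ (u - v) = 4 * (u ⬝ᵥ A *ᵥ v) := by
  have hvu : v ⬝ᵥ A *ᵥ u = u ⬝ᵥ A *ᵥ v := by
    rw [dotProduct_mulVec, ← mulVec_transpose, hA.eq, dotProduct_comm]
  simp only [add_dotProduct, sub_dotProduct, dotProduct_add, dotProduct_sub, mulVec_add,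
    mulVec_sub, hvu]
  ring

section AbsolutelyContinuous

variable {ι n : Type*} [Fintype ι] [DecidableEq ι] [Fintype n] [DecidableEq n] [Nonempty n]
  {P : Measure (ι → n → ℝ)} {A : Matrix n n ℝ} {i k : ι}

theorem ae_dotProduct_mulVec_sum_smul_ne_zero (hP : P ≪ volume) (hA : A.det ≠ 0) {a b : ι → ℝ}
    (hai : a i ≠ 0) (hbi : b i = 0) (hak : a k = 0) (hbk : b k ≠ 0) :
    ∀ᵐ z ∂P, (∑ j, a j • z j) ⬝ᵥ A *ᵥ (∑ j, b j • z j) ≠ 0 := by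
  let Φ : (ι → n → ℝ) →ₗ[ℝ] (n → ℝ) × (n → ℝ) :=
    (∑ j, a j • LinearMap.proj j).prod (∑ j, b j • LinearMap.proj j)
  have hΦ : ⇑Φ = fun z => (∑ j, a j • z j, ∑ j, b j • z j) := by
    funext z; simp [Φ]
  have hmeas : MeasurableSet {p : (n → ℝ) × (n → ℝ) | p.1 ⬝ᵥ A *ᵥ p.2 ≠ 0} :=
    (measurableSet_eq_fun (by fun_prop) measurable_const).compl
  have hsurj : Function.Surjective Φ := hΦ ▸ surjective_sum_smul_prod hai hbi hak hbk
  have := Measure.prod.instIsAddHaarMeasure (volume : Measure (n → ℝ)) (volume : Measure (n → ℝ))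
  have := (ae_comp_linearMap_mem_iff Φ volume (volume.prod volume) hsurj hmeas).2
    (ae_iff.2 (by simpa [← Measure.volume_eq_prod] using volume_setOf_dotProduct_mulVec_eq_zero hA))
  simp only [hΦ, Set.mem_ofPred_eq] at this
  exact hP.ae_le this

theorem ae_dotProduct_mulVec_sum_smul_ne (hP : P ≪ volume) (hA : A.IsSymm) (hA' : A.det ≠ 0) {c c' : ι → ℝ}
    (hci : c i ≠ 0) (hi : c' i = c i) (hck : c k ≠ 0) (hk : c' k = -c k) :
    ∀ᵐ z ∂P, (∑ j, c j • z j) ⬝ᵥ A *ᵥ (∑ j, c j • z j) ≠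
      (∑ j, c' j • z j) ⬝ᵥ A *ᵥ (∑ j, c' j • z j) := by
  set a := fun j => (c j + c' j) / 2
  set b := fun j => (c j - c' j) / 2
  have hc : c = a + b := by ext; simp [a, b]; ring
  have hc' : c' = a - b := by ext; simp [a, b]; ring
  filter_upwards [ae_dotProduct_mulVec_sum_smul_ne_zero hP hA' (i := i) (k := k) (a := a) (b := b)
    (by simpa [a, hi]) (by simp [b, hi]) (by simp [a, hk]) (by simpa [b, hk])] with z hz heq
  simp only [hc, hc', Pi.add_apply, Pi.sub_apply, add_smul, sub_smul, Finset.sum_add_distrib,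
    Finset.sum_sub_distrib] at heq
  have := dotProduct_mulVec_add_sub_sub hA (∑ j, a j • z j) (∑ j, b j • z j)
  exact hz (by linarith)

end AbsolutelyContinuous

theorem ProbabilityTheory.iIndepFun.map_absolutelyContinuous_volume {ι Ω : Type*} [Fintype ι]
    {E : ι → Type*} [∀ i, MeasureSpace (E i)] [∀ i, SigmaFinite (volume : Measure (E i))]
    [MeasurableSpace Ω] {μ : Measure Ω} [IsFiniteMeasure μ] {Z : ∀ i, Ω → E i}
    (hZ : ∀ i, AEMeasurable (Z i) μ) (h : iIndepFun Z μ) (hac : ∀ i, μ.map (Z i) ≪ volume) :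
    μ.map (fun ω i => Z i ω) ≪ volume := by
  rw [h.map_fun_eq_pi_map hZ]
  exact .pi hac

theorem exists_eq_and_exists_eq_not {ι : Type*} {g g' : ι → Bool} (hg : g' ≠ g)
    (hg' : g' ≠ fun j => !g j) : (∃ i, g' i = g i) ∧ ∃ k, g' k = !g k := by
  constructor <;> by_contra! h
  · exact hg' (funext fun j => by simpa [Bool.eq_not_iff] using h j)
  · exact hg (funext fun j => by simpa [Bool.eq_not_iff] using h j)

/-- For independent nondegenerate centered Gaussian cluster scores `Z_j ~ N(0, Σ_j)`
(encoded as pushforwards of an i.i.d. standard Gaussian vector by invertible matrices `L_j`),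
positive weights `ξ_j` and a positive definite weight matrix `A`, the statistics
`T(g) = ‖Σ_j g_j √ξ_j Z_j‖_A` satisfy `T(g) = T(-g)` surely, and for `g' ∉ {g, -g}`,
`P(T(g) = T(g')) = 0`. -/
theorem stmt7 {Ω : Type*} [MeasurableSpace Ω] (μ : Measure Ω) [IsProbabilityMeasure μ]
    (q dz : ℕ) (hdz : 0 < dz)
    (Z : Fin q → Ω → (Fin dz → ℝ)) (hmeas : ∀ j, Measurable (Z j))
    (hindep : iIndepFun Z μ)
    (L : Fin q → Matrix (Fin dz) (Fin dz) ℝ) (hL : ∀ j, IsUnit (L j).det)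
    (hgauss : ∀ j, Measure.map (Z j) μ =
      Measure.map (fun x => (L j) *ᵥ x)
        (Measure.pi fun _ : Fin dz => gaussianReal 0 1))
    (ξ : Fin q → ℝ) (hξ : ∀ j, 0 < ξ j)
    (A : Matrix (Fin dz) (Fin dz) ℝ) (hA : A.PosDef) :
    ∀ T : (Fin q → Bool) → Ω → ℝ,
      (T = fun g ω => Real.sqrt
        ((∑ j, ((if g j then (1 : ℝ) else -1) * Real.sqrt (ξ j)) • Z j ω) ⬝ᵥ
          (A *ᵥ ∑ j, ((if g j then (1 : ℝ) else -1) * Real.sqrt (ξ j)) • Z j ω))) →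
      (∀ g ω, T g ω = T (fun j => !(g j)) ω) ∧
      (∀ g g' : Fin q → Bool, g' ≠ g → g' ≠ (fun j => !(g j)) →
        μ {ω | T g ω = T g' ω} = 0) := by
  rintro T rfl
  refine ⟨fun g ω => ?_, fun g g' hg hg' => ?_⟩
  · have hneg : ∀ j, (if !g j then (1 : ℝ) else -1) = -(if g j then 1 else -1) := by
      intro j; cases g j <;> simp
    simp only [hneg, neg_mul, neg_smul, Finset.sum_neg_distrib, mulVec_neg, dotProduct_neg,
      neg_dotProduct, neg_neg]
  obtain ⟨⟨i, hi⟩, ⟨k, hk⟩⟩ := exists_eq_and_exists_eq_not hg hg'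
  have hlaw : μ.map (fun ω j => Z j ω) ≪ volume :=
    hindep.map_absolutelyContinuous_volume (fun j => (hmeas j).aemeasurable) fun j =>
      hgauss j ▸ absolutelyContinuous_map_mulVec (hL j)
        (pi_gaussianReal_absolutelyContinuous 0 one_ne_zero)
  let c (g : Fin q → Bool) (j : Fin q) : ℝ := (if g j then 1 else -1) * Real.sqrt (ξ j)
  have hc : ∀ g j, c g j ≠ 0 := fun g j =>
    mul_ne_zero (by split <;> norm_num) (Real.sqrt_pos.2 (hξ j)).ne'
  have : Nonempty (Fin dz) := ⟨⟨0, hdz⟩⟩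
  have hae := ae_of_ae_map (measurable_pi_lambda _ hmeas).aemeasurable
    (ae_dotProduct_mulVec_sum_smul_ne (c := c g) (c' := c g') hlaw
      (isHermitian_iff_isSymm.1 hA.1) hA.det_pos.ne' (hc g i) (by simp [c, hi]) (hc g k)
      (by cases hgk : g k <;> simp [c, hk, hgk]))
  refine measure_mono_null ?_ (ae_iff.1 hae)
  intro ω heq hne
  exact hne ((Real.sqrt_inj (by simpa using hA.posSemidef.dotProduct_mulVec_nonneg _)
    (by simpa using hA.posSemidef.dotProduct_mulVec_nonneg _)).1 heq)
end

section
/- Let Z₁,...,Z_q be independent nondegenerate ℝ^{d_z}-valued Gaussian vectors, let ξ_j > 0, let A_z be positive definite, let Q̃ ∈ ℝ^{d_z} with ‖Q̃‖_{A_z} > 0 (writing Q̃ = Q_{Z̃X}μ), and let a_j ≥ 0 with Σ_j ξ_j a_j = 1 and a_j > 0 exactly on a subset J_s. For g ∈ {-1,1}^q define AR_∞(g) = ‖Σ_j g_j √ξ_j Z_j + (Σ_j ξ_j g_j a_j) Q̃‖_{A_z}. Let G_s = {g : g not constant on J_s}. Then P(AR_∞(ι) > max_{g ∈ G_s} AR_∞(g))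 → 1 as ‖Q̃‖₂ → ∞. -/
/-!
Write `s_g = Σ_j g_j √ξ_j Z_j` and `b_g = Σ_j ξ_j g_j a_j`, so that `AR_∞(g) = ‖s_g + b_g Q̃‖_A`.
The weights `ξ_j a_j` are nonnegative, sum to one and are positive on `J_s`, so `b_ι = 1` while
`|b_g| < 1` for every `g` that is not constant on `J_s`. By the triangle inequality,
`AR_∞(g) < AR_∞(ι)` as soon as `‖s_g‖_A + ‖s_ι‖_A < (1 - |b_g|) ‖Q̃‖_A`. As `‖Q̃‖_A ≥ c ‖Q̃‖`
for some `c > 0` and only finitely many `g` occur, this holds whenever one fixed real random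
variable lies below a fixed positive multiple of `‖Q̃‖`, an event whose probability tends to one.
-/

open Matrix MeasureTheory ProbabilityTheory Finset Filter Topology Metric

namespace Matrix

variable {n : Type*} [Fintype n]

noncomputable def formNorm (A : Matrix n n ℝ) (v : n → ℝ) : ℝ := √(v ⬝ᵥ (A *ᵥ v))

variable {A : Matrix n n ℝ}

theorem formNorm_add_le (hA : A.PosSemidef) (u v : n → ℝ) :
    formNorm A (u + v) ≤ formNorm A u + formNorm A v := by
  let E := A.toSeminormedAddCommGroup hA
  have h (w : n → ℝ) : formNorm A w = @norm _ E.toNorm w := by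
    rw [formNorm, dotProduct_comm]; rfl
  simpa only [h] using @norm_add_le _ E.toSeminormedAddGroup u v

theorem formNorm_smul (A : Matrix n n ℝ) (t : ℝ) (v : n → ℝ) :
    formNorm A (t • v) = |t| * formNorm A v := by
  rw [formNorm, formNorm, mulVec_smul, smul_dotProduct, dotProduct_smul, smul_eq_mul,
    smul_eq_mul, ← mul_assoc, ← sq, Real.sqrt_mul (sq_nonneg t), Real.sqrt_sq_eq_abs]

theorem formNorm_neg (A : Matrix n n ℝ) (v : n → ℝ) : formNorm A (-v) = formNorm A v := by
  simpa using formNorm_smul A (-1) v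

theorem continuous_formNorm (A : Matrix n n ℝ) : Continuous (formNorm A) := by
  unfold formNorm; fun_prop

theorem PosDef.formNorm_pos (hA : A.PosDef) {v : n → ℝ} (hv : v ≠ 0) : 0 < formNorm A v :=
  Real.sqrt_pos.2 (by simpa using hA.dotProduct_mulVec_pos hv)

theorem PosDef.exists_pos_mul_norm_le_formNorm (hA : A.PosDef) :
    ∃ c > 0, ∀ v, c * ‖v‖ ≤ formNorm A v := by
  rcases isEmpty_or_nonempty n with hn | hn
  · exact ⟨1, one_pos, fun v => by simp [Subsingleton.elim v 0, formNorm]⟩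
  obtain ⟨u, hu, hmin⟩ := (isCompact_sphere (0 : n → ℝ) 1).exists_isMinOn
    (NormedSpace.sphere_nonempty.2 zero_le_one) (continuous_formNorm A).continuousOn
  refine ⟨formNorm A u, hA.formNorm_pos (ne_zero_of_mem_sphere one_ne_zero ⟨u, hu⟩), fun v => ?_⟩
  rcases eq_or_ne v 0 with rfl | hv
  · simp [formNorm]
  have hv' : ‖v‖⁻¹ • v ∈ sphere (0 : n → ℝ) 1 := by
    simp [norm_smul, inv_mul_cancel₀ (norm_ne_zero_iff.2 hv)]
  have := hmin hv'
  rw [Set.mem_ofPred_eq, formNorm_smul, abs_inv, abs_norm, inv_mul_eq_div,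
    le_div_iff₀ (norm_pos_iff.2 hv)] at this
  linarith

theorem formNorm_add_smul_lt_formNorm_add (hA : A.PosSemidef) {s t Q : n → ℝ} {b : ℝ}
    (h : formNorm A s + formNorm A t < (1 - |b|) * formNorm A Q) :
    formNorm A (s + b • Q) < formNorm A (t + Q) := by
  have hupper : formNorm A (s + b • Q) ≤ formNorm A s + |b| * formNorm A Q := by
    simpa only [formNorm_smul] using formNorm_add_le hA s (b • Q)
  have hlower : formNorm A Q ≤ formNorm A (t + Q) + formNorm A t := by
    simpa [formNorm_neg] using formNorm_add_le hA (t + Q) (-t)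
  linarith

end Matrix

theorem Finite.exists_pos_forall_le {ι : Type*} [Finite ι] {p : ι → Prop} {f : ι → ℝ}
    (hf : ∀ i, p i → 0 < f i) : ∃ δ > 0, ∀ i, p i → δ ≤ f i := by
  have h : ∀ᶠ δ in 𝓝[>] (0 : ℝ), δ ∈ Set.Ioi 0 ∧ ∀ i, p i → δ ≤ f i := by
    refine eventually_mem_nhdsWithin.and (eventually_all.2 fun i => ?_)
    by_cases hi : p i
    · exact nhdsWithin_le_nhds ((eventually_le_nhds (hf i hi)).mono fun δ h _ => h)
    · exact .of_forall fun _ h => absurd h hi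
  exact h.exists

section Signs

variable {ι : Type*} [Fintype ι]

theorem sum_mul_lt_sum_of_le_one {w ε : ι → ℝ} (hw : ∀ j, 0 ≤ w j) (hε : ∀ j, ε j ≤ 1) {i : ι}
    (hi : 0 < w i) (hεi : ε i < 1) : ∑ j, ε j * w j < ∑ j, w j :=
  Finset.sum_lt_sum (fun j _ => mul_le_of_le_one_left (hw j) (hε j))
    ⟨i, mem_univ i, mul_lt_of_lt_one_left hi hεi⟩

theorem abs_sum_sign_mul_lt_one {w : ι → ℝ} (hw : ∀ j, 0 ≤ w j) (hsum : ∑ j, w j = 1)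
    {s : Finset ι} (hs : ∀ j ∈ s, 0 < w j) {g : ι → Bool}
    (hg : ¬ ∀ j ∈ s, ∀ j' ∈ s, g j = g j') :
    |∑ j, (if g j then (1 : ℝ) else -1) * w j| < 1 := by
  have hlt_one {k k' : ι} (hk : k ∈ s) (hk' : k' ∈ s) (htrue : g k = true) (hfalse : g k' = false) :
      |∑ j, (if g j then (1 : ℝ) else -1) * w j| < 1 := by
    have hupper := sum_mul_lt_sum_of_le_one (ε := fun j => if g j then (1 : ℝ) else -1) hw
      (fun j => by split <;> norm_num) (hs k' hk') (by simp [hfalse])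
    have hlower := sum_mul_lt_sum_of_le_one (ε := fun j => -(if g j then (1 : ℝ) else -1)) hw
      (fun j => by split <;> norm_num) (hs k hk) (by simp [htrue])
    simp only [neg_mul, sum_neg_distrib] at hlower
    rw [abs_lt]
    constructor <;> linarith
  push Not at hg
  obtain ⟨i, hi, i', hi', hne⟩ := hg
  cases hgi : g i
  · exact hlt_one hi' hi (by simpa [hgi] using hne.symm) hgi
  · exact hlt_one hi hi' hgi (by simpa [hgi] using hne.symm)

end Signs

theorem tendsto_measureReal_of_setOf_lt_subset {Ω α : Type*} [MeasurableSpace Ω]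
    {μ : Measure Ω} [IsProbabilityMeasure μ] {l : Filter α} {f : α → ℝ}
    (hf : Tendsto f l atTop) (M : Ω → ℝ) {S : α → Set Ω} (hS : ∀ x, {ω | M ω < f x} ⊆ S x) :
    Tendsto (fun x => μ.real (S x)) l (𝓝 1) := by
  have hunion : ⋃ r : ℝ, {ω | M ω < r} = Set.univ :=
    Set.eq_univ_of_forall fun ω => Set.mem_iUnion.2 ⟨M ω + 1, by simp⟩
  have hmono : Monotone fun r : ℝ => {ω | M ω < r} := fun r r' hr ω (hω : M ω < r) =>
    hω.trans_le hr
  have hlt : Tendsto (fun r : ℝ => μ {ω | M ω < r}) atTop (𝓝 1) := by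
    have h := tendsto_measure_iUnion_atTop (μ := μ) hmono
    rwa [hunion, measure_univ] at h
  refine tendsto_of_tendsto_of_tendsto_of_le_of_le
    ((ENNReal.tendsto_toReal ENNReal.one_ne_top).comp (hlt.comp hf)) tendsto_const_nhds
    (fun x => measureReal_mono (hS x)) (fun x => measureReal_le_one)

theorem stmt14_general {Ω : Type*} [MeasurableSpace Ω] (μ : Measure Ω) [IsProbabilityMeasure μ]
    (q dz : ℕ)
    (Z : Fin q → Ω → (Fin dz → ℝ))
    (ξ a : Fin q → ℝ) (hξ : ∀ j, 0 < ξ j) (ha : ∀ j, 0 ≤ a j)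
    (hsum : ∑ j, ξ j * a j = 1) (Js : Finset (Fin q))
    (haJs : ∀ j ∈ Js, 0 < a j)
    (A : Matrix (Fin dz) (Fin dz) ℝ) (hA : A.PosDef) :
    ∀ ARinf : (Fin dz → ℝ) → (Fin q → Bool) → Ω → ℝ,
      (ARinf = fun Qt g ω =>
        Real.sqrt
          (((∑ j, ((if g j then (1 : ℝ) else -1) * Real.sqrt (ξ j)) • Z j ω) +
              (∑ j, ξ j * (if g j then (1 : ℝ) else -1) * a j) • Qt) ⬝ᵥ
            (A *ᵥ ((∑ j, ((if g j then (1 : ℝ) else -1) * Real.sqrt (ξ j)) • Z j ω) +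
              (∑ j, ξ j * (if g j then (1 : ℝ) else -1) * a j) • Qt)))) →
      Filter.Tendsto
        (fun Qt : Fin dz → ℝ =>
          (μ {ω | ∀ g : Fin q → Bool, ¬ (∀ j ∈ Js, ∀ j' ∈ Js, g j = g j') →
              ARinf Qt g ω < ARinf Qt (fun _ => true) ω}).toReal)
        (Filter.comap (fun Qt : Fin dz → ℝ => ‖Qt‖) Filter.atTop) (nhds 1) := by
  rintro ARinf rfl
  let s (g : Fin q → Bool) (ω : Ω) : Fin dz → ℝ :=
    ∑ j, ((if g j then (1 : ℝ) else -1) * √(ξ j)) • Z j ω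
  let b (g : Fin q → Bool) : ℝ := ∑ j, ξ j * (if g j then (1 : ℝ) else -1) * a j
  have hb_lt (g) (hg : ¬ ∀ j ∈ Js, ∀ j' ∈ Js, g j = g j') : |b g| < 1 := by
    have hb : b g = ∑ j, (if g j then (1 : ℝ) else -1) * (ξ j * a j) :=
      sum_congr rfl fun j _ => by ring
    exact hb ▸ abs_sum_sign_mul_lt_one
      (fun j => mul_nonneg (hξ j).le (ha j)) hsum (fun j hj => mul_pos (hξ j) (haJs j hj)) hg
  have hb_one : b (fun _ => true) = 1 := by simpa [b] using hsum
  obtain ⟨c, hc, hcA⟩ := hA.exists_pos_mul_norm_le_formNorm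
  obtain ⟨δ, hδ, hδb⟩ := Finite.exists_pos_forall_le fun g hg => sub_pos.2 (hb_lt g hg)
  refine tendsto_measureReal_of_setOf_lt_subset (f := fun Qt => δ * (c * ‖Qt‖))
    (tendsto_comap.const_mul_atTop (mul_pos hδ hc) |>.congr fun _ => mul_assoc _ _ _)
    (fun ω => formNorm A (s (fun _ => true) ω) + ∑ g, formNorm A (s g ω)) fun Qt ω hω g hg => ?_
  show formNorm A (s g ω + b g • Qt) < formNorm A (s (fun _ => true) ω + b (fun _ => true) • Qt)
  rw [hb_one, one_smul]
  refine formNorm_add_smul_lt_formNorm_add hA.posSemidef ?_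
  calc formNorm A (s g ω) + formNorm A (s (fun _ => true) ω)
      ≤ formNorm A (s (fun _ => true) ω) + ∑ g, formNorm A (s g ω) := by
        rw [add_comm]
        gcongr
        exact single_le_sum (f := fun g => formNorm A (s g ω)) (fun g _ => Real.sqrt_nonneg _)
          (mem_univ g)
    _ < δ * (c * ‖Qt‖) := hω
    _ ≤ (1 - |b g|) * (c * ‖Qt‖) := by gcongr; exact hδb g hg
    _ ≤ (1 - |b g|) * formNorm A Qt :=
        mul_le_mul_of_nonneg_left (hcA Qt) (by linarith [hb_lt g hg])

/-- Power of the bootstrap AR test: with independent nondegenerate centered Gaussian scores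
`Z_j`, positive weights `ξ_j`, coefficients `a_j ≥ 0` with `Σ_j ξ_j a_j = 1` and `a_j > 0`
exactly on `J_s`, and positive definite `A_z`, the probability that
`AR_∞(ι) = ‖Σ_j √ξ_j Z_j + Q̃‖_{A_z}` exceeds `AR_∞(g)` for every sign vector `g` not constant
on `J_s` tends to one as `‖Q̃‖ → ∞`, where
`AR_∞(g) = ‖Σ_j g_j √ξ_j Z_j + (Σ_j ξ_j g_j a_j) Q̃‖_{A_z}`. -/
theorem stmt14 {Ω : Type*} [MeasurableSpace Ω] (μ : Measure Ω) [IsProbabilityMeasure μ]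
    (q dz : ℕ)
    (Z : Fin q → Ω → (Fin dz → ℝ)) (hmeas : ∀ j, Measurable (Z j))
    (hindep : iIndepFun Z μ)
    (L : Fin q → Matrix (Fin dz) (Fin dz) ℝ) (hL : ∀ j, IsUnit (L j).det)
    (hgauss : ∀ j, Measure.map (Z j) μ =
      Measure.map (fun x => (L j) *ᵥ x)
        (Measure.pi fun _ : Fin dz => gaussianReal 0 1))
    (ξ a : Fin q → ℝ) (hξ : ∀ j, 0 < ξ j) (ha : ∀ j, 0 ≤ a j)
    (hsum : ∑ j, ξ j * a j = 1) (Js : Finset (Fin q))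
    (haJs : ∀ j ∈ Js, 0 < a j) (haJsc : ∀ j ∉ Js, a j = 0)
    (A : Matrix (Fin dz) (Fin dz) ℝ) (hA : A.PosDef) :
    ∀ ARinf : (Fin dz → ℝ) → (Fin q → Bool) → Ω → ℝ,
      (ARinf = fun Qt g ω =>
        Real.sqrt
          (((∑ j, ((if g j then (1 : ℝ) else -1) * Real.sqrt (ξ j)) • Z j ω) +
              (∑ j, ξ j * (if g j then (1 : ℝ) else -1) * a j) • Qt) ⬝ᵥ
            (A *ᵥ ((∑ j, ((if g j then (1 : ℝ) else -1) * Real.sqrt (ξ j)) • Z j ω) +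
              (∑ j, ξ j * (if g j then (1 : ℝ) else -1) * a j) • Qt)))) →
      Filter.Tendsto
        (fun Qt : Fin dz → ℝ =>
          (μ {ω | ∀ g : Fin q → Bool, ¬ (∀ j ∈ Js, ∀ j' ∈ Js, g j = g j') →
              ARinf Qt g ω < ARinf Qt (fun _ => true) ω}).toReal)
        (Filter.comap (fun Qt : Fin dz → ℝ => ‖Qt‖) Filter.atTop) (nhds 1) :=
  stmt14_general μ q dz Z ξ a hξ ha hsum Js haJs A hA
end

section
/- Let κ be a real number and consider the k-class estimator (β̂ᵀ, γ̂ᵀ)ᵀ = (X⃗ᵀX⃗ - κ X⃗ᵀM_{Z⃗}X⃗)⁻¹(X⃗ᵀY - κ X⃗ᵀM_{Z⃗}Y), where X⃗ = [X : W], Z⃗ = [Z : W], M_A = I - A(AᵀA)⁻¹Aᵀ. Then, provided the relevant matrices are invertible, β̂ satisfies the partialled-out formula β̂ = (Xᵀ P_{Z̃} X - μ Xᵀ M_{Z⃗} X)⁻¹ (Xᵀ P_{Z̃} Y - μ Xᵀ M_{Z⃗} Y), where μ = κ - 1, Z̃ = M_W Z, and P_A = A(AᵀA)⁻¹Aᵀ.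 -/
/-!
The k-class estimator solves the weighted normal equations `X⃗ᵀ G (Y - X⃗ b) = 0` with the
symmetric weight `G = 1 - κ M_{Z⃗}`, and `G W = W` because `M_{Z⃗} W = 0`. Eliminating the
`W`-block of these equations (Frisch–Waugh–Lovell) leaves `Xᵀ (G - P_W) (Y - X β̂) = 0`, and the
orthogonal decomposition `P_{Z⃗} = P_W + P_{Z̃}` turns the weight into
`G - P_W = P_{Z̃} - (κ - 1) M_{Z⃗}`.
-/

open Matrix

namespace Matrix

variable {m k l R : Type*} [Fintype m] [Fintype k] [DecidableEq k] [CommRing R]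

noncomputable def colProj (A : Matrix m k R) : Matrix m m R := A * (Aᵀ * A)⁻¹ * Aᵀ

theorem isSymm_colProj (A : Matrix m k R) : (colProj A).IsSymm := by
  rw [IsSymm, colProj, transpose_mul, transpose_mul, transpose_transpose, transpose_nonsing_inv,
    transpose_mul, transpose_transpose, Matrix.mul_assoc]

theorem colProj_mul_self {A : Matrix m k R} (hA : IsUnit (Aᵀ * A).det) : colProj A * A = A := by
  rw [colProj, Matrix.mul_assoc, Matrix.mul_assoc, nonsing_inv_mul _ hA, Matrix.mul_one]

theorem transpose_mul_colProj {A : Matrix m k R} (hA : IsUnit (Aᵀ * A).det) :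
    Aᵀ * colProj A = Aᵀ := by
  rw [colProj, ← Matrix.mul_assoc, ← Matrix.mul_assoc, mul_nonsing_inv _ hA, Matrix.one_mul]

theorem mul_colProj_of_mul_eq {G : Matrix m m R} {A : Matrix m k R} (h : G * A = A) :
    G * colProj A = colProj A := by
  rw [colProj, ← Matrix.mul_assoc, ← Matrix.mul_assoc, h]

theorem colProj_mul_of_transpose_mul_eq_zero {A : Matrix m k R} {B : Matrix m l R}
    (h : Aᵀ * B = 0) : colProj A * B = 0 := by
  rw [colProj, Matrix.mul_assoc, h, Matrix.mul_zero]

theorem colProj_mul_colProj_of_transpose_mul_eq_zero [Fintype l] [DecidableEq l]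
    {A : Matrix m k R} {B : Matrix m l R} (h : Aᵀ * B = 0) : colProj A * colProj B = 0 := by
  calc colProj A * colProj B = colProj A * B * ((Bᵀ * B)⁻¹ * Bᵀ) := by
        simp only [colProj, Matrix.mul_assoc]
    _ = 0 := by rw [colProj_mul_of_transpose_mul_eq_zero h, Matrix.zero_mul]

theorem colProj_fromCols_mul [Fintype l] [DecidableEq l] {Z : Matrix m k R}
    {W : Matrix m l R} (hZW : IsUnit ((fromCols Z W)ᵀ * fromCols Z W).det) :
    colProj (fromCols Z W) * Z = Z ∧ colProj (fromCols Z W) * W = W :=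
  (fromCols_ext_iff _ _ _ _).1 (by rw [← mul_fromCols, colProj_mul_self hZW])

theorem IsSymm.eq_of_mul_eq_of_mul_eq {P Q : Matrix m m R} (hP : P.IsSymm) (hQ : Q.IsSymm)
    (hPQ : P * Q = Q) (hQP : Q * P = P) : P = Q :=
  calc P = Q * P := hQP.symm
    _ = (P * Q)ᵀ := by rw [transpose_mul, hP.eq, hQ.eq]
    _ = Q := by rw [hPQ, hQ.eq]

theorem colProj_fromCols [Fintype l] [DecidableEq l] [DecidableEq m] (Z : Matrix m k R)
    (W : Matrix m l R) (hW : IsUnit (Wᵀ * W).det)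
    (hZW : IsUnit ((fromCols Z W)ᵀ * fromCols Z W).det)
    (hZt : IsUnit (((1 - colProj W) * Z)ᵀ * ((1 - colProj W) * Z)).det) :
    colProj (fromCols Z W) = colProj W + colProj ((1 - colProj W) * Z) := by
  set P := colProj (fromCols Z W)
  set PW := colProj W
  set Zt := (1 - PW) * Z with hZt_def
  have hZ_split : Zt + PW * Z = Z := by
    rw [hZt_def, Matrix.sub_mul, Matrix.one_mul, sub_add_cancel]
  have hWZt : Wᵀ * Zt = 0 := by
    rw [← Matrix.mul_assoc, Matrix.mul_sub, Matrix.mul_one, transpose_mul_colProj hW, sub_self,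
      Matrix.zero_mul]
  have hZtW : Ztᵀ * W = 0 := by
    rw [← transpose_transpose (Ztᵀ * W), transpose_mul, transpose_transpose, hWZt, transpose_zero]
  have hPZW : P * Z = Z ∧ P * W = W := colProj_fromCols_mul hZW
  have hPPW : P * PW = PW := mul_colProj_of_mul_eq hPZW.2
  have hPZt : P * Zt = Zt := by
    rw [hZt_def, ← Matrix.mul_assoc, Matrix.mul_sub, Matrix.mul_one, hPPW, Matrix.sub_mul,
      Matrix.sub_mul, hPZW.1, Matrix.one_mul]
  -- `Z = Zt + PW * Z` splits `Z` into pieces that `colProj Zt` fixes and kills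
  have hPZtZ : colProj Zt * Z = Zt := by
    calc colProj Zt * Z = colProj Zt * (Zt + PW * Z) := by rw [hZ_split]
      _ = Zt := by
          rw [Matrix.mul_add, colProj_mul_self hZt, ← Matrix.mul_assoc,
            colProj_mul_colProj_of_transpose_mul_eq_zero hZtW, Matrix.zero_mul, add_zero]
  have hQZW : (PW + colProj Zt) * fromCols Z W = fromCols Z W := by
    rw [mul_fromCols, Matrix.add_mul, Matrix.add_mul, hPZtZ, colProj_mul_self hW,
      colProj_mul_of_transpose_mul_eq_zero hZtW, add_zero, add_comm, hZ_split]
  refine (isSymm_colProj _).eq_of_mul_eq_of_mul_eq ((isSymm_colProj W).add (isSymm_colProj Zt))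
    ?_ (mul_colProj_of_mul_eq hQZW)
  rw [Matrix.mul_add, hPPW, mul_colProj_of_mul_eq hPZt]

theorem normalEq_iff_eq_inv_mulVec {X : Matrix m k R} {H : Matrix m m R}
    (hX : IsUnit (Xᵀ * H * X).det) (Y : m → R) (b : k → R) :
    Xᵀ *ᵥ (H *ᵥ (Y - X *ᵥ b)) = 0 ↔ b = (Xᵀ * H * X)⁻¹ *ᵥ ((Xᵀ * H) *ᵥ Y) := by
  rw [mulVec_sub, mulVec_sub, mulVec_mulVec, mulVec_mulVec, mulVec_mulVec, sub_eq_zero]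
  constructor
  · intro h
    rw [h, mulVec_mulVec, nonsing_inv_mul _ hX, one_mulVec]
  · intro h
    rw [h, mulVec_mulVec, mul_nonsing_inv _ hX, one_mulVec]

theorem normalEq_sub_smul_iff {X : Matrix m k R} {P M : Matrix m m R} {c : R}
    (hX : IsUnit (Xᵀ * P * X - c • (Xᵀ * M * X)).det) (Y : m → R) (b : k → R) :
    Xᵀ *ᵥ ((P - c • M) *ᵥ (Y - X *ᵥ b)) = 0 ↔
      b = (Xᵀ * P * X - c • (Xᵀ * M * X))⁻¹ *ᵥ ((Xᵀ * P) *ᵥ Y - c • ((Xᵀ * M) *ᵥ Y)) := by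
  have hmat : Xᵀ * P * X - c • (Xᵀ * M * X) = Xᵀ * (P - c • M) * X := by
    simp only [Matrix.mul_sub, Matrix.sub_mul, Matrix.mul_smul, Matrix.smul_mul]
  have hvec : (Xᵀ * P) *ᵥ Y - c • ((Xᵀ * M) *ᵥ Y) = (Xᵀ * (P - c • M)) *ᵥ Y := by
    simp only [Matrix.mul_sub, Matrix.mul_smul, sub_mulVec, smul_mulVec]
  rw [hmat] at hX ⊢
  rw [hvec, normalEq_iff_eq_inv_mulVec hX]

theorem normalEq_of_normalEq_fromCols [Fintype l] {X : Matrix m l R} {W : Matrix m k R}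
    {G : Matrix m m R} (hG : G.IsSymm) (hGW : G * W = W) (hW : IsUnit (Wᵀ * W).det)
    {Y : m → R} {β : l → R} {γ : k → R}
    (h : (fromCols X W)ᵀ *ᵥ (G *ᵥ (Y - fromCols X W *ᵥ Sum.elim β γ)) = 0) :
    Xᵀ *ᵥ ((G - colProj W) *ᵥ (Y - X *ᵥ β)) = 0 := by
  have hWG : Wᵀ * G = Wᵀ := by rw [← hG.eq, ← transpose_mul, hGW]
  set r := Y - fromCols X W *ᵥ Sum.elim β γ with hr
  rw [transpose_fromCols, fromRows_mulVec, ← Sum.elim_zero_zero, Sum.elim_eq_iff] at h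
  obtain ⟨hXr, hWr⟩ := h
  rw [mulVec_mulVec, hWG] at hWr
  have hY : Y - X *ᵥ β = r + W *ᵥ γ := by
    rw [hr, fromCols_mulVec_sumElim]; abel
  have hPWr : colProj W *ᵥ r = 0 := by
    rw [colProj, ← mulVec_mulVec, hWr, mulVec_zero]
  rw [hY, mulVec_add, mulVec_mulVec, Matrix.sub_mul, hGW, colProj_mul_self hW, sub_self,
    zero_mulVec, add_zero, sub_mulVec, hPWr, sub_zero, hXr]

end Matrix

/-- Frisch–Waugh–Lovell identity for k-class estimators: with `X⃗ = [X : W]`, `Z⃗ = [Z : W]`,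
`M_A = I - A(AᵀA)⁻¹Aᵀ`, `P_A = A(AᵀA)⁻¹Aᵀ` and `Z̃ = M_W Z`, the `β`-component of the k-class
estimator `(β̂ᵀ, γ̂ᵀ)ᵀ = (X⃗ᵀX⃗ - κ X⃗ᵀM_{Z⃗}X⃗)⁻¹(X⃗ᵀY - κ X⃗ᵀM_{Z⃗}Y)` equals
`(XᵀP_{Z̃}X - μ XᵀM_{Z⃗}X)⁻¹(XᵀP_{Z̃}Y - μ XᵀM_{Z⃗}Y)` with `μ = κ - 1`, provided the
relevant matrices are invertible. -/
theorem stmt15 (n dx dw dz : ℕ) (Y : Fin n → ℝ)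
    (X : Matrix (Fin n) (Fin dx) ℝ) (W : Matrix (Fin n) (Fin dw) ℝ)
    (Z : Matrix (Fin n) (Fin dz) ℝ) (κ : ℝ) :
    ∀ (Xvec : Matrix (Fin n) (Fin dx ⊕ Fin dw) ℝ)
      (Zvec : Matrix (Fin n) (Fin dz ⊕ Fin dw) ℝ)
      (MZ MW : Matrix (Fin n) (Fin n) ℝ) (Zt : Matrix (Fin n) (Fin dz) ℝ)
      (PZt : Matrix (Fin n) (Fin n) ℝ) (est : Fin dx ⊕ Fin dw → ℝ),
      Xvec = Matrix.fromCols X W →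
      Zvec = Matrix.fromCols Z W →
      MZ = 1 - Zvec * (Zvecᵀ * Zvec)⁻¹ * Zvecᵀ →
      MW = 1 - W * (Wᵀ * W)⁻¹ * Wᵀ →
      Zt = MW * Z →
      PZt = Zt * (Ztᵀ * Zt)⁻¹ * Ztᵀ →
      est = (Xvecᵀ * Xvec - κ • (Xvecᵀ * MZ * Xvec))⁻¹ *ᵥ
        (Xvecᵀ *ᵥ Y - κ • ((Xvecᵀ * MZ) *ᵥ Y)) →
      IsUnit (Wᵀ * W).det →
      IsUnit (Zvecᵀ * Zvec).det →
      IsUnit (Ztᵀ * Zt).det →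
      IsUnit (Xvecᵀ * Xvec - κ • (Xvecᵀ * MZ * Xvec)).det →
      IsUnit (Xᵀ * PZt * X - (κ - 1) • (Xᵀ * MZ * X)).det →
      (fun i => est (Sum.inl i)) =
        (Xᵀ * PZt * X - (κ - 1) • (Xᵀ * MZ * X))⁻¹ *ᵥ
          ((Xᵀ * PZt) *ᵥ Y - (κ - 1) • ((Xᵀ * MZ) *ᵥ Y)) := by
  intro Xvec Zvec MZ MW Zt PZt est hXvec hZvec hMZ hMW hZt hPZt hest hW hZvecW hZtZt hA hB
  subst hXvec hZvec hMW hZt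
  obtain ⟨β, γ, rfl⟩ : ∃ β γ, est = Sum.elim β γ := ⟨_, _, (Sum.elim_comp_inl_inr est).symm⟩
  change MZ = 1 - colProj (fromCols Z W) at hMZ
  change PZt = colProj ((1 - colProj W) * Z) at hPZt
  have hMZ_eq : MZ = 1 - colProj W - PZt := by
    rw [hMZ, hPZt, colProj_fromCols Z W hW hZvecW hZtZt]; abel
  set G := 1 - κ • MZ with hG
  have hG_symm : G.IsSymm := by
    rw [hG, hMZ]; exact isSymm_one.sub ((isSymm_one.sub (isSymm_colProj _)).smul κ)
  have hGW : G * W = W := by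
    rw [hG, hMZ, Matrix.sub_mul, Matrix.one_mul, Matrix.smul_mul, Matrix.sub_mul, Matrix.one_mul,
      (colProj_fromCols_mul hZvecW).2, sub_self, smul_zero, sub_zero]
  have hsplit : G - colProj W = PZt - (κ - 1) • MZ := by
    rw [hG, hMZ_eq]; module
  have hnormal : (fromCols X W)ᵀ *ᵥ (G *ᵥ (Y - fromCols X W *ᵥ Sum.elim β γ)) = 0 := by
    refine (normalEq_sub_smul_iff (P := 1) (by simpa only [Matrix.mul_one] using hA) _ _).2 ?_
    simpa only [Matrix.mul_one] using hest
  have hβ := normalEq_of_normalEq_fromCols hG_symm hGW hW hnormal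
  rw [hsplit] at hβ
  exact (normalEq_sub_smul_iff hB _ _).1 hβ
end

section
/- Suppose scalars AR_n, rk_n, LM_n satisfy rk_n → ∞, AR_n = O_p(1), LM_n = O_p(1), and AR_n - rk_n < 0 with probability approaching one. Define LR_n = (1/2)(AR_n - rk_n + √((AR_n - rk_n)² + 4·LM_n·rk_n)). Then LR_n = LM_n·rk_n/(rk_n - AR_n)·(1 + o_p(1)) = LM_n + o_p(1). -/
/-!
`LR_n` is the nonnegative root `x` of `x² + d x - q = 0` with `d = rk_n - AR_n` and
`q = LM_n rk_n`. From `x (d + x) = q` one gets `x = (q / d) (1 - x / (d + x))` and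
`0 ≤ x / (d + x) ≤ x / d ≤ q / d²`. Since `d → ∞`, `rk_n / d → 1` and `LM_n` is bounded,
`q / d² → 0`; hence the relative error vanishes and
`LR_n - LM_n = LM_n ((rk_n / d)(1 - x / (d + x)) - 1) → 0`.
-/

open Filter Topology

/-- The nonnegative root of `x ^ 2 + d * x - q` when `0 ≤ q`. -/
noncomputable def posRoot (d q : ℝ) : ℝ := (-d + √(d ^ 2 + 4 * q)) / 2

section posRoot

variable {d q : ℝ}

lemma posRoot_nonneg (hq : 0 ≤ q) : 0 ≤ posRoot d q := by
  have : |d| ≤ √(d ^ 2 + 4 * q) := by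
    rw [← Real.sqrt_sq_eq_abs]
    exact Real.sqrt_le_sqrt (by linarith)
  unfold posRoot
  linarith [le_abs_self d]

lemma posRoot_mul_add_self (hq : 0 ≤ q) : posRoot d q * (d + posRoot d q) = q := by
  have hs := Real.sq_sqrt (by positivity : 0 ≤ d ^ 2 + 4 * q)
  unfold posRoot
  linear_combination hs / 4

lemma posRoot_le_div (hd : 0 < d) (hq : 0 ≤ q) : posRoot d q ≤ q / d := by
  rw [le_div_iff₀ hd]
  nlinarith [posRoot_mul_add_self (d := d) hq, posRoot_nonneg (d := d) hq]

lemma posRoot_eq_div_mul (hd : 0 < d) (hq : 0 ≤ q) :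
    posRoot d q = q / d * (1 - posRoot d q / (d + posRoot d q)) := by
  have hx := posRoot_nonneg (d := d) hq
  have hdx : d + posRoot d q ≠ 0 := by positivity
  field_simp
  linear_combination d * posRoot_mul_add_self (d := d) hq

lemma abs_posRoot_div_le (hd : 0 < d) (hq : 0 ≤ q) :
    |posRoot d q / (d + posRoot d q)| ≤ q / d ^ 2 := by
  have hx := posRoot_nonneg (d := d) hq
  rw [abs_of_nonneg (by positivity)]
  calc posRoot d q / (d + posRoot d q) ≤ posRoot d q / d := by gcongr; linarith
    _ ≤ q / d / d := by gcongr; exact posRoot_le_div hd hq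
    _ = q / d ^ 2 := by ring

end posRoot

section Asymptotics

variable {ι : Type*} {l : Filter ι} {a ℓ r : ι → ℝ}

lemma Filter.Tendsto.atTop_sub_isBoundedUnder (hr : Tendsto r l atTop)
    (ha : IsBoundedUnder (· ≤ ·) l (fun i => ‖a i‖)) : Tendsto (fun i => r i - a i) l atTop := by
  obtain ⟨B, hB⟩ := ha
  refine tendsto_atTop_add_right_of_le' l (-B) hr ?_
  filter_upwards [hB] with i hi
  exact neg_le_neg (le_abs_self (a i) |>.trans hi)

lemma Filter.Tendsto.div_sub_isBoundedUnder (hr : Tendsto r l atTop)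
    (ha : IsBoundedUnder (· ≤ ·) l (fun i => ‖a i‖)) :
    Tendsto (fun i => r i / (r i - a i)) l (𝓝 1) := by
  have hd := hr.atTop_sub_isBoundedUnder ha
  have h : Tendsto (fun i => 1 + a i * (r i - a i)⁻¹) l (𝓝 (1 + 0)) :=
    tendsto_const_nhds.add (isBoundedUnder_le_mul_tendsto_zero ha hd.inv_tendsto_atTop)
  rw [add_zero] at h
  refine h.congr' ?_
  filter_upwards [hd.eventually_gt_atTop 0] with i hi
  field_simp
  ring

variable (hr : Tendsto r l atTop) (ha : IsBoundedUnder (· ≤ ·) l (fun i => ‖a i‖))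
  (hℓ : IsBoundedUnder (· ≤ ·) l (fun i => ‖ℓ i‖)) (hℓ0 : ∀ᶠ i in l, 0 ≤ ℓ i)
include hr ha hℓ hℓ0

lemma tendsto_posRoot_div_add_posRoot :
    Tendsto (fun i => posRoot (r i - a i) (ℓ i * r i) /
      (r i - a i + posRoot (r i - a i) (ℓ i * r i))) l (𝓝 0) := by
  have hd := hr.atTop_sub_isBoundedUnder ha
  have hbound : Tendsto (fun i => ℓ i * (r i / (r i - a i) * (r i - a i)⁻¹)) l (𝓝 0) := by
    refine isBoundedUnder_le_mul_tendsto_zero hℓ ?_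
    simpa using (hr.div_sub_isBoundedUnder ha).mul hd.inv_tendsto_atTop
  refine squeeze_zero_norm' ?_ hbound
  filter_upwards [hd.eventually_gt_atTop 0, hr.eventually_ge_atTop 0, hℓ0] with i hdi hri hℓi
  calc _ ≤ ℓ i * r i / (r i - a i) ^ 2 :=
        abs_posRoot_div_le hdi (mul_nonneg hℓi hri)
    _ = _ := by field_simp

lemma tendsto_posRoot_sub :
    Tendsto (fun i => posRoot (r i - a i) (ℓ i * r i) - ℓ i) l (𝓝 0) := by
  have hd := hr.atTop_sub_isBoundedUnder ha
  have hfactor : Tendsto (fun i => r i / (r i - a i) * (1 - posRoot (r i - a i) (ℓ i * r i) /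
      (r i - a i + posRoot (r i - a i) (ℓ i * r i))) - 1) l (𝓝 0) := by
    simpa using ((hr.div_sub_isBoundedUnder ha).mul
      ((tendsto_const_nhds (x := (1 : ℝ))).sub
        (tendsto_posRoot_div_add_posRoot hr ha hℓ hℓ0))).sub_const 1
  refine (isBoundedUnder_le_mul_tendsto_zero hℓ hfactor).congr' ?_
  filter_upwards [hd.eventually_gt_atTop 0, hr.eventually_ge_atTop 0, hℓ0] with i hdi hri hℓi
  linear_combination -posRoot_eq_div_mul hdi (mul_nonneg hℓi hri)

end Asymptotics

theorem stmt16_general (AR LM rk : ℕ → ℝ)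
    (hrk : Tendsto rk atTop atTop)
    (hARb : ∃ B, ∀ n, |AR n| ≤ B) (hLMb : ∃ B, ∀ n, |LM n| ≤ B)
    (hLM0 : ∀ n, 0 ≤ LM n) :
    ∀ LR : ℕ → ℝ,
      (LR = fun n =>
        (AR n - rk n + Real.sqrt ((AR n - rk n) ^ 2 + 4 * LM n * rk n)) / 2) →
      ∃ e : ℕ → ℝ, Tendsto e atTop (nhds 0) ∧
        (∀ᶠ n in atTop, LR n = LM n * rk n / (rk n - AR n) * (1 + e n)) ∧
        Tendsto (fun n => LR n - LM n) atTop (nhds 0) := by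
  intro LR hLR
  have hLR_eq : LR = fun n => posRoot (rk n - AR n) (LM n * rk n) := by
    rw [hLR]
    funext n
    rw [posRoot, ← neg_sq, neg_sub, mul_assoc 4, neg_sub]
  subst hLR_eq
  have hAR : IsBoundedUnder (· ≤ ·) atTop (fun n => ‖AR n‖) := isBoundedUnder_of hARb
  have hLM : IsBoundedUnder (· ≤ ·) atTop (fun n => ‖LM n‖) := isBoundedUnder_of hLMb
  have hLM0' : ∀ᶠ n in atTop, 0 ≤ LM n := .of_forall hLM0
  refine ⟨fun n => -(posRoot (rk n - AR n) (LM n * rk n) /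
      (rk n - AR n + posRoot (rk n - AR n) (LM n * rk n))), ?_, ?_,
    tendsto_posRoot_sub hrk hAR hLM hLM0'⟩
  · simpa using (tendsto_posRoot_div_add_posRoot hrk hAR hLM hLM0').neg
  · filter_upwards [(hrk.atTop_sub_isBoundedUnder hAR).eventually_gt_atTop 0,
      hrk.eventually_ge_atTop 0] with n hdn hrn
    rw [← sub_eq_add_neg]
    exact posRoot_eq_div_mul hdn (mul_nonneg (hLM0 n) hrn)

/-- Asymptotic equivalence of CQLR and LM: if `rk_n → ∞`, `AR_n` and `LM_n` are bounded,
`LM_n ≥ 0`, and `AR_n - rk_n < 0` eventually, then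
`LR_n = (1/2)(AR_n - rk_n + √((AR_n - rk_n)² + 4 LM_n rk_n))` satisfies
`LR_n = LM_n · rk_n/(rk_n - AR_n) · (1 + o(1))` and `LR_n = LM_n + o(1)`. -/
theorem stmt16 (AR LM rk : ℕ → ℝ)
    (hrk : Tendsto rk atTop atTop)
    (hARb : ∃ B, ∀ n, |AR n| ≤ B) (hLMb : ∃ B, ∀ n, |LM n| ≤ B)
    (hLM0 : ∀ n, 0 ≤ LM n)
    (hneg : ∀ᶠ n in atTop, AR n - rk n < 0) :
    ∀ LR : ℕ → ℝ,
      (LR = fun n =>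
        (AR n - rk n + Real.sqrt ((AR n - rk n) ^ 2 + 4 * LM n * rk n)) / 2) →
      ∃ e : ℕ → ℝ, Tendsto e atTop (nhds 0) ∧
        (∀ᶠ n in atTop, LR n = LM n * rk n / (rk n - AR n) * (1 + e n)) ∧
        Tendsto (fun n => LR n - LM n) atTop (nhds 0) :=
  stmt16_general AR LM rk hrk hARb hLMb hLM0
end
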